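/- For fixed d > 0, the relative standard deviation of r_k, namely √(Γ(k+2/d)·Γ(k) − Γ(k+1/d)²)/Γ(k+1/d), is asymptotically equivalent to 1/(d·√k) as k → ∞. -/

import Mathlib

/-!
Put `R(x) = Γ(x) Γ(x + 2a) / Γ(x + a)²`; with `a = 1/d` the relative standard deviation of `r_k`
is `√(R(k) - 1)`. Euler's limit formula writes `R(x)` as the product
`∏ⱼ (1 - a² / (x + a + j)²)⁻¹`. Bounding this product by `1 ± ∑ⱼ a² / (x + a + j)²`, and the sum
by telescoping sums of `1/t - 1/(t + 1)`, squeezes `R(x) - 1` between `a² / (x + a)` and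
`a² / (x + a - 1 - a²)`. Hence `x (R(x) - 1) → a²`, and `d √k √(R(k) - 1) → d a = 1`.
-/

open Real Filter Finset Topology

section ProductBounds

variable {ι R : Type*} [CommRing R] [LinearOrder R] [IsStrictOrderedRing R]

theorem one_add_sum_le_prod_one_add (s : Finset ι) {f : ι → R}
    (hf : ∀ i ∈ s, 0 ≤ f i) : 1 + ∑ i ∈ s, f i ≤ ∏ i ∈ s, (1 + f i) := by
  classical
  induction s using Finset.induction_on with
  | empty => simp
  | insert i s hi ih =>
    rw [prod_insert hi, sum_insert hi]
    have hfi := hf i (mem_insert_self i s)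
    have hs := ih fun j hj => hf j (mem_insert_of_mem hj)
    have hsum : 0 ≤ ∑ j ∈ s, f j := sum_nonneg fun j hj => hf j (mem_insert_of_mem hj)
    nlinarith

theorem one_sub_sum_le_prod_one_sub (s : Finset ι) {f : ι → R}
    (hf₀ : ∀ i ∈ s, 0 ≤ f i) (hf₁ : ∀ i ∈ s, f i ≤ 1) :
    1 - ∑ i ∈ s, f i ≤ ∏ i ∈ s, (1 - f i) := by
  classical
  induction s using Finset.induction_on with
  | empty => simp
  | insert i s hi ih =>
    rw [prod_insert hi, sum_insert hi]
    have hfi₀ := hf₀ i (mem_insert_self i s)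
    have hfi₁ := hf₁ i (mem_insert_self i s)
    have hs := ih (fun j hj => hf₀ j (mem_insert_of_mem hj))
      fun j hj => hf₁ j (mem_insert_of_mem hj)
    have hsum : 0 ≤ ∑ j ∈ s, f j := sum_nonneg fun j hj => hf₀ j (mem_insert_of_mem hj)
    nlinarith

end ProductBounds

theorem inv_sub_inv_add_one_le_inv_sq {t : ℝ} (ht : 0 < t) : t⁻¹ - (t + 1)⁻¹ ≤ (t ^ 2)⁻¹ := by
  rw [inv_sub_inv ht.ne' (by positivity), add_sub_cancel_left, one_div]
  exact inv_anti₀ (by positivity) (by nlinarith)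

theorem inv_sq_le_inv_sub_one_sub_inv {t : ℝ} (ht : 1 < t) : (t ^ 2)⁻¹ ≤ (t - 1)⁻¹ - t⁻¹ := by
  rw [inv_sub_inv (by linarith) (by linarith), sub_sub_cancel, one_div]
  exact inv_anti₀ (by nlinarith) (by nlinarith)

theorem inv_sub_inv_add_le_sum_inv_sq {c : ℝ} (hc : 0 < c) (n : ℕ) :
    c⁻¹ - (c + n)⁻¹ ≤ ∑ j ∈ range n, ((c + j) ^ 2)⁻¹ := by
  have htel := sum_range_sub' (fun j : ℕ => (c + j)⁻¹) n
  simp only [Nat.cast_zero, add_zero, Nat.cast_succ, ← add_assoc] at htel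
  rw [← htel]
  exact sum_le_sum fun j _ => inv_sub_inv_add_one_le_inv_sq (by positivity)

theorem sum_inv_sq_le_inv_sub_one {c : ℝ} (hc : 1 < c) (n : ℕ) :
    ∑ j ∈ range n, ((c + j) ^ 2)⁻¹ ≤ (c - 1)⁻¹ :=
  calc ∑ j ∈ range n, ((c + j) ^ 2)⁻¹
      ≤ ∑ j ∈ range n, ((c - 1 + j)⁻¹ - (c - 1 + (j + 1 : ℕ))⁻¹) :=
        sum_le_sum fun j _ => by
          refine (inv_sq_le_inv_sub_one_sub_inv (t := c + j) ?_).trans_eq ?_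
          · linarith [j.cast_nonneg (α := ℝ)]
          · push_cast; ring_nf
    _ = (c - 1)⁻¹ - (c - 1 + n)⁻¹ := by
        rw [sum_range_sub' (fun j : ℕ => (c - 1 + j)⁻¹) n]; simp
    _ ≤ (c - 1)⁻¹ := by
        have : 0 < c - 1 + n := by positivity
        linarith [inv_pos.2 this]

noncomputable def gammaRatio (a x : ℝ) : ℝ := Gamma x * Gamma (x + 2 * a) / Gamma (x + a) ^ 2

theorem GammaSeq_mul_GammaSeq_div_sq {x a : ℝ} (hx : 0 < x) (hxa : 0 < x + 2 * a) {n : ℕ}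
    (hn : n ≠ 0) :
    GammaSeq x n * GammaSeq (x + 2 * a) n / GammaSeq (x + a) n ^ 2 =
      ∏ j ∈ range (n + 1), (x + a + j) ^ 2 / ((x + j) * (x + 2 * a + j)) := by
  have hpos : ∀ y : ℝ, 0 < y → ∀ j : ℕ, 0 < y + (j : ℝ) := fun y hy j => by positivity
  have hA := prod_pos fun j (_ : j ∈ range (n + 1)) => hpos x hx j
  have hB := prod_pos fun j (_ : j ∈ range (n + 1)) => hpos _ hxa j
  have hC := prod_pos fun j (_ : j ∈ range (n + 1)) => hpos (x + a) (by linarith) j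
  have hN : (0 : ℝ) < n := by positivity
  have hpow : (n : ℝ) ^ x * (n : ℝ) ^ (x + 2 * a) = ((n : ℝ) ^ (x + a)) ^ 2 := by
    rw [← rpow_add hN, ← rpow_natCast, ← rpow_mul hN.le]; ring_nf
  rw [prod_div_distrib, prod_mul_distrib, prod_pow]
  simp only [GammaSeq]
  field_simp
  exact hpow

theorem tendsto_prod_gammaRatio {x a : ℝ} (hx : 0 < x) (hxa : 0 < x + 2 * a) :
    Tendsto (fun n => ∏ j ∈ range n, (1 - a ^ 2 / (x + a + j) ^ 2)⁻¹) atTop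
      (𝓝 (gammaRatio a x)) := by
  have hGamma : Gamma (x + a) ^ 2 ≠ 0 := (pow_pos (Gamma_pos_of_pos (by linarith)) 2).ne'
  have hlim := ((GammaSeq_tendsto_Gamma x).mul (GammaSeq_tendsto_Gamma (x + 2 * a))).div
    ((GammaSeq_tendsto_Gamma (x + a)).pow 2) hGamma
  rw [← tendsto_add_atTop_iff_nat 1]
  refine hlim.congr' ?_
  filter_upwards [eventually_ne_atTop 0] with n hn
  rw [Pi.div_apply, GammaSeq_mul_GammaSeq_div_sq hx hxa hn]
  refine prod_congr rfl fun j _ => ?_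
  have hc : x + a + j ≠ 0 := by linarith [j.cast_nonneg (α := ℝ)]
  rw [one_sub_div (pow_ne_zero 2 hc), inv_div]
  ring_nf

theorem sq_div_sq_lt_one {x a t : ℝ} (hx : 0 < x) (hxa : 0 < x + 2 * a) (ht : 0 ≤ t) :
    a ^ 2 / (x + a + t) ^ 2 < 1 := by
  rw [div_lt_one (by nlinarith)]
  nlinarith [mul_pos (add_pos_of_pos_of_nonneg hx ht) (add_pos_of_pos_of_nonneg hxa ht)]

theorem one_add_le_gammaRatio {x a : ℝ} (hx : 0 < x) (hxa : 0 < x + 2 * a) :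
    1 + a ^ 2 / (x + a) ≤ gammaRatio a x := by
  set q : ℕ → ℝ := fun j => a ^ 2 / (x + a + j) ^ 2
  have hq₀ (j : ℕ) : 0 ≤ q j := by positivity
  have hq₁ (j : ℕ) : q j < 1 := sq_div_sq_lt_one hx hxa j.cast_nonneg
  have hc : 0 < x + a := by linarith
  have hpartial (n : ℕ) :
      1 + a ^ 2 * ((x + a)⁻¹ - (x + a + n)⁻¹) ≤ ∏ j ∈ range n, (1 - q j)⁻¹ :=
    calc 1 + a ^ 2 * ((x + a)⁻¹ - (x + a + n)⁻¹)
        ≤ 1 + ∑ j ∈ range n, q j := by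
          simp only [q, div_eq_mul_inv, ← mul_sum]
          gcongr
          exact inv_sub_inv_add_le_sum_inv_sq hc n
      _ ≤ ∏ j ∈ range n, (1 + q j) := one_add_sum_le_prod_one_add _ fun j _ => hq₀ j
      _ ≤ ∏ j ∈ range n, (1 - q j)⁻¹ := by
          refine prod_le_prod (fun j _ => by linarith [hq₀ j]) fun j _ => ?_
          rw [← one_div, le_div_iff₀ (by linarith [hq₁ j])]
          nlinarith [hq₀ j]
  have hlim : Tendsto (fun n : ℕ => 1 + a ^ 2 * ((x + a)⁻¹ - (x + a + n)⁻¹)) atTop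
      (𝓝 (1 + a ^ 2 * ((x + a)⁻¹ - 0))) :=
    (((tendsto_atTop_add_const_left _ (x + a) tendsto_natCast_atTop_atTop).inv_tendsto_atTop
      |>.const_sub _).const_mul _).const_add _
  have := le_of_tendsto_of_tendsto' hlim (tendsto_prod_gammaRatio hx hxa) hpartial
  simpa [div_eq_mul_inv] using this

theorem gammaRatio_le {x a : ℝ} (hx : 0 < x) (hxa : 0 < x + 2 * a) (h : a ^ 2 < x + a - 1) :
    gammaRatio a x ≤ 1 + a ^ 2 / (x + a - 1 - a ^ 2) := by
  set q : ℕ → ℝ := fun j => a ^ 2 / (x + a + j) ^ 2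
  have hq₀ (j : ℕ) : 0 ≤ q j := by positivity
  have hq₁ (j : ℕ) : q j < 1 := sq_div_sq_lt_one hx hxa j.cast_nonneg
  have hc : 1 < x + a := by nlinarith
  have hsum (n : ℕ) : ∑ j ∈ range n, q j ≤ a ^ 2 / (x + a - 1) := by
    simp only [q, div_eq_mul_inv, ← mul_sum]
    gcongr
    exact sum_inv_sq_le_inv_sub_one hc n
  have hpos : 0 < 1 - a ^ 2 / (x + a - 1) := by
    rw [sub_pos, div_lt_one (by linarith)]; exact h
  have hpartial (n : ℕ) : ∏ j ∈ range n, (1 - q j)⁻¹ ≤ (1 - a ^ 2 / (x + a - 1))⁻¹ := by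
    rw [prod_inv_distrib]
    refine inv_anti₀ hpos ?_
    calc 1 - a ^ 2 / (x + a - 1) ≤ 1 - ∑ j ∈ range n, q j := by linarith [hsum n]
      _ ≤ ∏ j ∈ range n, (1 - q j) :=
        one_sub_sum_le_prod_one_sub _ (fun j _ => hq₀ j) fun j _ => (hq₁ j).le
  have hid : (1 - a ^ 2 / (x + a - 1))⁻¹ = 1 + a ^ 2 / (x + a - 1 - a ^ 2) := by
    have : x + a - 1 ≠ 0 := by linarith
    have : x + a - 1 - a ^ 2 ≠ 0 := by linarith
    field_simp
    ring
  rw [← hid]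
  exact le_of_tendsto' (tendsto_prod_gammaRatio hx hxa) hpartial

theorem tendsto_mul_div_add_atTop (b c : ℝ) :
    Tendsto (fun x => x * (c / (x + b))) atTop (𝓝 c) := by
  have h : Tendsto (fun x => c - c * b / (x + b)) atTop (𝓝 (c - 0)) :=
    tendsto_const_nhds.sub <|
      tendsto_const_nhds.div_atTop (tendsto_atTop_add_const_right _ b tendsto_id)
  rw [sub_zero] at h
  refine h.congr' ?_
  filter_upwards [eventually_gt_atTop (-b)] with x hx
  have : x + b ≠ 0 := by linarith
  field_simp
  ring

theorem tendsto_mul_gammaRatio_sub_one (a : ℝ) :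
    Tendsto (fun x => x * (gammaRatio a x - 1)) atTop (𝓝 (a ^ 2)) := by
  refine tendsto_of_tendsto_of_tendsto_of_le_of_le' (tendsto_mul_div_add_atTop a (a ^ 2))
    (tendsto_mul_div_add_atTop (a - 1 - a ^ 2) (a ^ 2)) ?_ ?_ <;>
  filter_upwards [eventually_gt_atTop 0, eventually_gt_atTop (-2 * a),
    eventually_gt_atTop (a ^ 2 - a + 1)] with x hx hxa h <;>
  refine mul_le_mul_of_nonneg_left ?_ hx.le
  · linarith [one_add_le_gammaRatio hx (by linarith : 0 < x + 2 * a)]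
  · rw [← add_sub_assoc, ← add_sub_assoc]
    linarith [gammaRatio_le hx (by linarith : 0 < x + 2 * a) (by linarith)]

theorem sqrt_Gamma_mul_Gamma_sub_sq_div_Gamma {x a : ℝ} (hxa : 0 < x + a) :
    √(Gamma (x + 2 * a) * Gamma x - Gamma (x + a) ^ 2) / Gamma (x + a) =
      √(gammaRatio a x - 1) := by
  have hG := Gamma_pos_of_pos hxa
  have h : gammaRatio a x - 1 =
      (Gamma (x + 2 * a) * Gamma x - Gamma (x + a) ^ 2) / Gamma (x + a) ^ 2 := by
    rw [gammaRatio]; field_simp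
  rw [h, sqrt_div' _ (sq_nonneg _), sqrt_sq hG.le]

theorem relative_std_asymptotics (d : ℝ) (hd : 0 < d) :
    Tendsto (fun k : ℕ =>
        (Real.sqrt (Real.Gamma ((k : ℝ) + 2 / d) * Real.Gamma (k : ℝ)
            - Real.Gamma ((k : ℝ) + 1 / d) ^ 2) / Real.Gamma ((k : ℝ) + 1 / d))
          / (1 / (d * Real.sqrt k)))
      atTop (nhds 1) := by
  set a := 1 / d
  have hlim : Tendsto (fun k : ℕ => √(d ^ 2 * (k * (gammaRatio a k - 1)))) atTop (𝓝 1) := by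
    have h := ((tendsto_mul_gammaRatio_sub_one a).comp tendsto_natCast_atTop_atTop).const_mul
      (d ^ 2)
    rw [← mul_pow, mul_one_div_cancel hd.ne', one_pow] at h
    simpa using h.sqrt
  refine hlim.congr fun k => ?_
  rw [show (k : ℝ) + 2 / d = k + 2 * a by ring,
    sqrt_Gamma_mul_Gamma_sub_sq_div_Gamma (by positivity), sqrt_mul (sq_nonneg d), sqrt_sq hd.le,
    sqrt_mul k.cast_nonneg, div_div_eq_mul_div, div_one]
  ring
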